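/- arXiv:2604.24291 — 2 statements merged into one kernel-verified Lean document; each statement's English description precedes it below -/
import Mathlib

section
/- Let E be a linear map on d×d complex matrices satisfying E(E_{ij})E(P_k) = δ_{jk} E(E_{ik}) and E(P_k)E(E_{ij}) = δ_{ki} E(E_{kj}) for all i,j,k, and suppose there is a permutation π of {1,…,d} with E(P_i) = P_{π(i)}. Then for each i,j there exists a scalar c_{ij} ∈ ℂ with E(E_{ij}) = c_{ij} |π(i)⟩⟨π(j)|, and c_{ii} = 1 for all i. -/
namespace Matrix

variable {m n α : Type*} [Fintype m] [Fintype n] [DecidableEq m] [DecidableEq n]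
  [NonAssocSemiring α]

theorem eq_single_of_single_mul_eq_of_mul_single_eq {M : Matrix m n α} {a : m} {b : n}
    (hL : single a a (1 : α) * M = M) (hR : M * single b b (1 : α) = M) :
    M = single a b (M a b) :=
  calc M = single a a (1 : α) * M * single b b (1 : α) := by rw [hL, hR]
    _ = single a b (M a b) := by rw [single_mul_mul_single, one_mul, mul_one]

end Matrix

theorem matrix_unit_images {d : ℕ}
    (E : Matrix (Fin d) (Fin d) ℂ →ₗ[ℂ] Matrix (Fin d) (Fin d) ℂ)
    (π : Equiv.Perm (Fin d))
    (h1 : ∀ i j k : Fin d,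
      E (Matrix.single i j 1) * E (Matrix.single k k 1) =
        if j = k then E (Matrix.single i k 1) else 0)
    (h2 : ∀ i j k : Fin d,
      E (Matrix.single k k 1) * E (Matrix.single i j 1) =
        if k = i then E (Matrix.single k j 1) else 0)
    (hπ : ∀ i : Fin d,
      E (Matrix.single i i 1) = Matrix.single (π i) (π i) 1) :
    ∃ c : Fin d → Fin d → ℂ,
      (∀ i j : Fin d,
        E (Matrix.single i j 1) =
          c i j • Matrix.single (π i) (π j) 1) ∧
      (∀ i : Fin d, c i i = 1) := by
  refine ⟨fun i j => E (Matrix.single i j 1) (π i) (π j), fun i j => ?_, fun i => by simp [hπ]⟩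
  rw [Matrix.smul_single, smul_eq_mul, mul_one]
  exact Matrix.eq_single_of_single_mul_eq_of_mul_single_eq
    (by simpa [hπ] using h2 i j i) (by simpa [hπ] using h1 i j j)
end

section
/- Define the quantum addition channel output ρ ⊞_α σ = α ρ + (1−α) σ − i√(α(1−α)) [ρ, σ] for density matrices ρ, σ and α ∈ [0,1]. If E(X) = A ⊙ X is a Schur multiplier map with A ⪰ 0, A_{ii}=1, and σ is diagonal, then E(ρ) ⊞_α E(σ) = E(ρ ⊞_α σ). -/
open Matrix ComplexOrder in
/-- The quantum addition channel combination `ρ ⊞_α σ`. -/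
noncomputable def quantumAdd {d : ℕ} (α : ℝ) (ρ σ : Matrix (Fin d) (Fin d) ℂ) :
    Matrix (Fin d) (Fin d) ℂ :=
  (α : ℂ) • ρ + ((1 - α : ℝ) : ℂ) • σ -
    (Complex.I * (Real.sqrt (α * (1 - α)) : ℂ)) • (ρ * σ - σ * ρ)

/-! Multiplying by a diagonal matrix on either side scales rows or columns, which commutes with
any Schur multiplier; and a Schur multiplier with unit diagonal fixes diagonal matrices. Hence
`X ↦ A ⊙ X` preserves the commutator with a diagonal `σ`, and it is linear on the remaining terms. -/

namespace Matrix

variable {m n α : Type*}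

theorem hadamard_sub [NonUnitalNonAssocRing α] (A M N : Matrix m n α) :
    A ⊙ (M - N) = A ⊙ M - A ⊙ N := by
  ext i j
  exact mul_sub (A i j) (M i j) (N i j)

theorem hadamard_diagonal_of_diag_eq_one [DecidableEq n] [MulZeroOneClass α] {A : Matrix n n α}
    (hA : A.diag = 1) (w : n → α) : A ⊙ diagonal w = diagonal w := by
  rw [hadamard_diagonal, hA, one_mul]

theorem hadamard_mul_diagonal [Fintype n] [DecidableEq n] [NonUnitalSemiring α]
    (A M : Matrix m n α) (w : n → α) :
    (A ⊙ M) * diagonal w = A ⊙ (M * diagonal w) := by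
  ext i j
  simp only [mul_diagonal, hadamard_apply, mul_assoc]

theorem diagonal_mul_hadamard [Fintype m] [DecidableEq m] [NonUnitalCommSemiring α]
    (A M : Matrix m n α) (w : m → α) :
    diagonal w * (A ⊙ M) = A ⊙ (diagonal w * M) := by
  ext i j
  simp only [diagonal_mul, hadamard_apply, mul_left_comm]

end Matrix

open Matrix ComplexOrder in
theorem schur_commutes_with_quantum_addition_general {d : ℕ} (α : ℝ)
    (A : Matrix (Fin d) (Fin d) ℂ) (hdiag : ∀ i, A i i = 1)
    (ρ σ : Matrix (Fin d) (Fin d) ℂ)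
    (hσ : σ.IsDiag) :
    quantumAdd α (A ⊙ ρ) (A ⊙ σ) = A ⊙ quantumAdd α ρ σ := by
  rw [← hσ.diagonal_diag]
  simp only [quantumAdd, hadamard_sub, hadamard_add, hadamard_smul, hadamard_mul_diagonal,
    diagonal_mul_hadamard, hadamard_diagonal_of_diag_eq_one (funext hdiag)]

open Matrix ComplexOrder in
theorem schur_commutes_with_quantum_addition {d : ℕ} (α : ℝ)
    (hα : α ∈ Set.Icc (0 : ℝ) 1)
    (A : Matrix (Fin d) (Fin d) ℂ) (hA : A.PosSemidef) (hdiag : ∀ i, A i i = 1)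
    (ρ σ : Matrix (Fin d) (Fin d) ℂ)
    (hρ : ρ.PosSemidef) (hρtr : ρ.trace = 1)
    (hσpsd : σ.PosSemidef) (hσtr : σ.trace = 1) (hσ : σ.IsDiag) :
    quantumAdd α (A ⊙ ρ) (A ⊙ σ) = A ⊙ quantumAdd α ρ σ :=
  schur_commutes_with_quantum_addition_general α A hdiag ρ σ hσ
end
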